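/- Let p := P(T is odd), and if d = 1 assume p < 1. Then for all m ≥ 1 and k ≥ 1, E( (D_m · D_{m+k}) L_m L_{m+k} ) = (p^2/(2d−1))·((2p−1)/(2d−1))^{k−1}, where · denotes the Euclidean inner product on ℝ^d. -/

import Mathlib

open MeasureTheory ProbabilityTheory Filter

noncomputable section

/-- The `2d` unit vectors `±e_i` of `ℤ^d ⊆ ℝ^d`. -/
def unitVecs (d : ℕ) : Set (EuclideanSpace ℝ (Fin d)) :=
  {v | ∃ i : Fin d, v = EuclideanSpace.single i 1 ∨ v = EuclideanSpace.single i (-1)}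

/-- The random times `τ_n = T_1 + ⋯ + T_n` (with `τ_0 = 0`). -/
def tauT {Ω : Type} (T : ℕ → Ω → ℕ) (n : ℕ) (ω : Ω) : ℕ :=
  ∑ k ∈ Finset.Icc 1 n, T k ω

/-- The inverse time change `τ⁻¹_n = inf {m ≥ 1 : τ_m ≥ n}`. -/
def tauInv {Ω : Type} (T : ℕ → Ω → ℕ) (n : ℕ) (ω : Ω) : ℕ :=
  sInf {m : ℕ | 1 ≤ m ∧ n ≤ tauT T m ω}

/-- The σ-field `F_k = σ(D_1, T_1, …, D_k, T_k)`. -/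
def walkSigma {Ω β : Type} [MeasurableSpace Ω] [MeasurableSpace β]
    (D : ℕ → Ω → β) (T : ℕ → Ω → ℕ) (k : ℕ) : MeasurableSpace Ω :=
  ⨆ m ∈ Finset.Icc 1 k,
    (MeasurableSpace.comap (D m) inferInstance ⊔ MeasurableSpace.comap (T m) inferInstance)

/-- The filtration `(F_{n+1})_{n ≥ 0}`, i.e. `(F_n)_{n ≥ 1}` reindexed from `0`. -/
def walkFiltration {Ω β : Type} [m0 : MeasurableSpace Ω] [MeasurableSpace β]
    (D : ℕ → Ω → β) (T : ℕ → Ω → ℕ)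
    (measD : ∀ m, Measurable (D m)) (measT : ∀ m, Measurable (T m)) :
    Filtration ℕ m0 where
  seq n := walkSigma D T (n + 1)
  mono' := by
    intro i j hij
    refine iSup_le fun m => iSup_le fun hm => ?_
    refine le_iSup₂_of_le m ?_ le_rfl
    simp only [Finset.mem_Icc] at hm ⊢
    omega
  le' := by
    intro n
    refine iSup_le fun m => iSup_le fun _ => sup_le ?_ ?_
    · exact (measD m).comap_le
    · exact (measT m).comap_le

section helpers
variable {Ω β : Type}

theorem tauT_mono (T : ℕ → Ω → ℕ) (ω : Ω) : Monotone fun m => tauT T m ω := by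
  intro a b hab
  exact Finset.sum_le_sum_of_subset (Finset.Icc_subset_Icc_right hab)

theorem self_le_tauT (T : ℕ → Ω → ℕ) (T_pos : ∀ m ω, 1 ≤ T m ω) (n : ℕ) (ω : Ω) :
    n ≤ tauT T n ω := by
  calc n = ∑ _k ∈ Finset.Icc 1 n, 1 := by simp
  _ ≤ tauT T n ω := Finset.sum_le_sum fun k _ => T_pos k ω

theorem tauInv_le_iff (T : ℕ → Ω → ℕ) (T_pos : ∀ m ω, 1 ≤ T m ω) (n k : ℕ) (hk : 1 ≤ k) :
    {ω | tauInv T n ω ≤ k} = {ω | n ≤ tauT T k ω} := by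
  ext ω
  simp only [Set.mem_setOf_eq, tauInv]
  constructor
  · intro hle
    rcases Nat.eq_zero_or_pos n with hn | hn
    · omega
    · have hne : {m : ℕ | 1 ≤ m ∧ n ≤ tauT T m ω}.Nonempty :=
        ⟨n, hn, self_le_tauT T T_pos n ω⟩
      obtain ⟨h1, h2⟩ := Nat.sInf_mem hne
      exact le_trans h2 (tauT_mono T ω hle)
  · intro hle
    exact Nat.sInf_le ⟨hk, hle⟩

theorem measurable_tauT_walkSigma [MeasurableSpace Ω] [MeasurableSpace β]
    (D : ℕ → Ω → β) (T : ℕ → Ω → ℕ) (k : ℕ) :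
    Measurable[walkSigma D T k] (tauT T k) := by
  apply Finset.measurable_sum
  intro m hm
  refine measurable_iff_comap_le.2 (le_trans ?_ (le_iSup₂_of_le m hm le_rfl))
  exact le_sup_right

theorem measurableSet_tauInv_le [MeasurableSpace Ω] [MeasurableSpace β]
    (D : ℕ → Ω → β) (T : ℕ → Ω → ℕ) (T_pos : ∀ m ω, 1 ≤ T m ω) (n k : ℕ) (hk : 1 ≤ k) :
    MeasurableSet[walkSigma D T k] {ω | tauInv T n ω ≤ k} := by
  rw [tauInv_le_iff T T_pos n k hk]
  exact measurable_tauT_walkSigma D T k measurableSet_Ici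

end helpers

/-- The σ-field `{A : A ∩ {σ ≤ k} ∈ F_k for all k = 1, …, n}` associated with a
random time `σ` bounded by `n`. -/
def stoppedSigma {Ω : Type} (F : ℕ → MeasurableSpace Ω) (σf : Ω → ℕ) (n : ℕ)
    (h : ∀ k, 1 ≤ k → k ≤ n → MeasurableSet[F k] {ω | σf ω ≤ k}) : MeasurableSpace Ω where
  MeasurableSet' A := ∀ k, 1 ≤ k → k ≤ n → MeasurableSet[F k] (A ∩ {ω | σf ω ≤ k})
  measurableSet_empty := fun k _ _ => by
    simp
  measurableSet_compl := fun A hA k hk1 hk2 => by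
    have hs : MeasurableSet[F k] {ω | σf ω ≤ k} := h k hk1 hk2
    have heq : Aᶜ ∩ {ω | σf ω ≤ k} = {ω | σf ω ≤ k} \ (A ∩ {ω | σf ω ≤ k}) := by
      ext ω; by_cases hω : σf ω ≤ k <;> simp [hω]
    rw [heq]
    exact hs.diff (hA k hk1 hk2)
  measurableSet_iUnion := fun s hs k hk1 hk2 => by
    rw [Set.iUnion_inter]
    exact MeasurableSet.iUnion fun i => hs i k hk1 hk2

/-- The σ-field `F_{τ⁻¹_n} = {A : A ∩ {τ⁻¹_n ≤ k} ∈ F_k for all k = 1, …, n}`. -/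
def Fstop {Ω β : Type} [MeasurableSpace Ω] [MeasurableSpace β]
    (D : ℕ → Ω → β) (T : ℕ → Ω → ℕ) (T_pos : ∀ m ω, 1 ≤ T m ω) (n : ℕ) :
    MeasurableSpace Ω :=
  stoppedSigma (walkSigma D T) (tauInv T n) n
    (fun k hk1 _ => measurableSet_tauInv_le D T T_pos n k hk1)
/-- Setup for the reinforced time-changed walk: i.i.d. times `(T_m)_{m ≥ 1}` with values in
`{1, 2, …}`, step lengths `L_m = 1(T_m odd)`, and directions `(D_m)_{m ≥ 1}` on the `2d` unit
vectors with `D_1` uniform and, conditionally on `(D_m, L_m)`, `D_{m+1}` uniform on the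
`2d - 1` unit vectors different from `D_m` if `L_m = 0`, resp. different from `-D_m` if
`L_m = 1`. The joint law of directions and times is specified through the probabilities of
the cylinder events. -/
structure ReinforcedWalk (d : ℕ) (Ω : Type) [MeasurableSpace Ω] (μ : Measure Ω) where
  T : ℕ → Ω → ℕ
  D : ℕ → Ω → EuclideanSpace ℝ (Fin d)
  measT : ∀ m, Measurable (T m)
  measD : ∀ m, Measurable (D m)
  T_pos : ∀ m ω, 1 ≤ T m ω
  T_iid : iIndepFun (fun m : ℕ => T (m + 1)) μ
  T_ident : ∀ m : ℕ, IdentDistrib (T (m + 1)) (T 1) μ μ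
  D_mem : ∀ m ω, D m ω ∈ unitVecs d
  DT_path : ∀ n : ℕ, 1 ≤ n → ∀ (v : ℕ → EuclideanSpace ℝ (Fin d)) (t : ℕ → ℕ),
    (∀ m, v m ∈ unitVecs d) →
    (∀ m, 1 ≤ m → m + 1 ≤ n →
      (if Odd (t m) then v (m + 1) ≠ -v m else v (m + 1) ≠ v m)) →
    μ {ω | ∀ m, 1 ≤ m → m ≤ n → D m ω = v m ∧ T m ω = t m}
      = ENNReal.ofReal ((2 * (d : ℝ))⁻¹ * ((2 * (d : ℝ) - 1)⁻¹) ^ (n - 1))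
        * ∏ m ∈ Finset.Icc 1 n, μ {ω | T 1 ω = t m}

namespace ReinforcedWalk

variable {d : ℕ} {Ω : Type} [MeasurableSpace Ω] {μ : Measure Ω}

/-- The step lengths `L_m = 1(T_m odd)`. -/
def L (Wk : ReinforcedWalk d Ω μ) (m : ℕ) (ω : Ω) : ℕ :=
  if Odd (Wk.T m ω) then 1 else 0

/-- The reinforced time-changed walk `W^r_n = ∑_{m=1}^n D_m L_m`. -/
def W (Wk : ReinforcedWalk d Ω μ) (n : ℕ) (ω : Ω) : EuclideanSpace ℝ (Fin d) :=
  ∑ m ∈ Finset.Icc 1 n, (Wk.L m ω : ℝ) • Wk.D m ω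

/-- The probability `p = P(T is odd)`. -/
def p (Wk : ReinforcedWalk d Ω μ) : ℝ := (μ {ω | Odd (Wk.T 1 ω)}).toReal

/-- The expectation `E(T)` of the generic time. -/
def ET (Wk : ReinforcedWalk d Ω μ) : ℝ := ∫ ω, (Wk.T 1 ω : ℝ) ∂μ

/-- The diffusion constant `C^r = d p/(d - p)`. -/
def Cr (Wk : ReinforcedWalk d Ω μ) : ℝ := (d : ℝ) * Wk.p / ((d : ℝ) - Wk.p)

/-- The martingale `M^r_n = W^r_n + (p/(2(d-p))) D_n (2 L_n - 1)`. -/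
def M (Wk : ReinforcedWalk d Ω μ) (n : ℕ) (ω : Ω) : EuclideanSpace ℝ (Fin d) :=
  Wk.W n ω + (Wk.p / (2 * ((d : ℝ) - Wk.p)) * (2 * (Wk.L n ω : ℝ) - 1)) • Wk.D n ω

/-- The senile reinforced random walk `S^r_n = W^r_{τ⁻¹_n} - D_{τ⁻¹_n} 1(τ_{τ⁻¹_n} - n odd)`. -/
def S (Wk : ReinforcedWalk d Ω μ) (n : ℕ) (ω : Ω) : EuclideanSpace ℝ (Fin d) :=
  Wk.W (tauInv Wk.T n ω) ω
    - (if Odd (tauT Wk.T (tauInv Wk.T n ω) ω - n) then (1 : ℝ) else 0) • Wk.D (tauInv Wk.T n ω) ω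

end ReinforcedWalk

/-!
Given the first `n` directions and parities, `D_{n+1}` is uniform on the `2d - 1` unit vectors
other than the forbidden one (`D_n` if `L_n = 0`, `-D_n` if `L_n = 1`) and `L_{n+1}` is an
independent Bernoulli(`p`) variable; this Markov property is read off the cylinder
probabilities of `ReinforcedWalk` after summing over the times with prescribed parities. Since
the `2d` unit vectors sum to zero, the allowed next directions `v` satisfy
`∑ ⟪w, v⟫ = (2 L_n - 1) ⟪w, D_n⟫`. Hence `h_j := E(⟪D_m, D_{m+j}⟫ L_m (2 L_{m+j} - 1))` satisfies
`h_{j+1} = (2p - 1)/(2d - 1) h_j` with `h_0 = E L_m = p`, and the correlation in question equals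
`p/(2d - 1) h_{k-1}`.
-/

open Finset
open scoped Classical InnerProductSpace

def unitVecFinset (d : ℕ) : Finset (EuclideanSpace ℝ (Fin d)) :=
  (univ ×ˢ {1, -1}).image fun q : Fin d × ℝ => EuclideanSpace.single q.1 q.2

theorem mem_unitVecFinset {d : ℕ} {v : EuclideanSpace ℝ (Fin d)} :
    v ∈ unitVecFinset d ↔ v ∈ unitVecs d := by
  simp [unitVecFinset, unitVecs, or_and_right, exists_or, eq_comm]

theorem EuclideanSpace.injOn_single {ι : Type*} [DecidableEq ι] :
    Set.InjOn (fun q : ι × ℝ => EuclideanSpace.single q.1 q.2) {q | q.2 ≠ 0} := by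
  rintro ⟨i, a⟩ ha ⟨j, b⟩ - hij
  have hi := congrArg (· i) hij
  by_cases h : i = j
  · subst h; simpa using hi
  · exact absurd (by simpa [h] using hi) ha

theorem injOn_single_unitVecFinset (d : ℕ) :
    Set.InjOn (fun q : Fin d × ℝ => EuclideanSpace.single q.1 q.2)
      ↑(univ ×ˢ {1, -1} : Finset (Fin d × ℝ)) :=
  EuclideanSpace.injOn_single.mono fun q hq => by
    rcases (by simpa using hq : q.2 = 1 ∨ q.2 = -1) with h | h <;> simp [h]

theorem card_unitVecFinset (d : ℕ) : #(unitVecFinset d) = 2 * d := by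
  rw [unitVecFinset, card_image_of_injOn (injOn_single_unitVecFinset d),
    card_product, card_univ, Fintype.card_fin, card_pair (by norm_num), mul_comm]

theorem neg_mem_unitVecs {d : ℕ} {v : EuclideanSpace ℝ (Fin d)} (hv : v ∈ unitVecs d) :
    -v ∈ unitVecs d := by
  obtain ⟨i, rfl | rfl⟩ := hv <;> exact ⟨i, by simp [← PiLp.single_neg]⟩

theorem inner_self_of_mem_unitVecs {d : ℕ} {v : EuclideanSpace ℝ (Fin d)} (hv : v ∈ unitVecs d) :
    ⟪v, v⟫_ℝ = 1 := by
  obtain ⟨i, rfl | rfl⟩ := hv <;> simp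

theorem sum_inner_unitVecFinset {d : ℕ} (w : EuclideanSpace ℝ (Fin d)) :
    ∑ v ∈ unitVecFinset d, ⟪w, v⟫_ℝ = 0 := by
  rw [unitVecFinset, sum_image (injOn_single_unitVecFinset d), sum_product]
  simp [EuclideanSpace.inner_single_right, sum_pair (show (1 : ℝ) ≠ -1 by norm_num)]

theorem MeasureTheory.integral_comp_eq_sum_measureReal {Ω α : Type*} [MeasurableSpace Ω]
    {μ : Measure Ω} [IsFiniteMeasure μ] (X : Ω → α) (s : Finset α) (hXs : ∀ ω, X ω ∈ s)
    (hX : ∀ a ∈ s, MeasurableSet (X ⁻¹' {a})) (g : α → ℝ) :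
    ∫ ω, g (X ω) ∂μ = ∑ a ∈ s, g a * μ.real (X ⁻¹' {a}) := by
  have hg : (fun ω => g (X ω)) = fun ω => ∑ a ∈ s, (X ⁻¹' {a}).indicator (fun _ => g a) ω := by
    funext ω
    rw [sum_eq_single_of_mem (X ω) (hXs ω) fun a _ ha => by simp [Ne.symm ha]]
    simp
  rw [hg, integral_finsetSum _ fun a ha => (integrable_const _).indicator (hX a ha)]
  exact sum_congr rfl fun a ha => by
    rw [integral_indicator_const _ (hX a ha), smul_eq_mul, mul_comm]

theorem MeasureTheory.Measure.apply_eq_of_forall_singleton_eq {α : Type*} [MeasurableSpace α]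
    [MeasurableSingletonClass α] {ν ρ : Measure α} {B : Set α} (hB : B.Countable)
    (h : ∀ t ∈ B, ν {t} = ρ {t}) : ν B = ρ B := by
  have hsum : ∀ κ : Measure α, ∑' t : B, κ {(t : α)} = κ B := fun κ => by
    simpa using tsum_measure_preimage_singleton (μ := κ) hB (f := id)
      fun _ _ => measurableSet_singleton _
  rw [← hsum ν, ← hsum ρ]
  exact tsum_congr fun t => h t t.2

namespace ReinforcedWalk

variable {d : ℕ}

abbrev State (d : ℕ) := EuclideanSpace ℝ (Fin d) × Bool

def forbiddenDir (x : State d) : EuclideanSpace ℝ (Fin d) :=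
  if x.2 then -x.1 else x.1

theorem forbiddenDir_mem_unitVecs {x : State d} (hx : x.1 ∈ unitVecs d) :
    forbiddenDir x ∈ unitVecs d := by
  unfold forbiddenDir; split_ifs
  exacts [neg_mem_unitVecs hx, hx]

theorem card_erase_forbiddenDir {x : State d} (hx : x.1 ∈ unitVecs d) :
    #((unitVecFinset d).erase (forbiddenDir x)) = 2 * d - 1 := by
  rw [card_erase_of_mem (mem_unitVecFinset.2 (forbiddenDir_mem_unitVecs hx)), card_unitVecFinset]

theorem sum_erase_forbiddenDir_inner {x : State d} (hx : x.1 ∈ unitVecs d)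
    (w : EuclideanSpace ℝ (Fin d)) :
    ∑ v ∈ (unitVecFinset d).erase (forbiddenDir x), ⟪w, v⟫_ℝ
      = (2 * (x.2.toNat : ℝ) - 1) * ⟪w, x.1⟫_ℝ := by
  rw [sum_erase_eq_sub (mem_unitVecFinset.2 (forbiddenDir_mem_unitVecs hx)),
    sum_inner_unitVecFinset, forbiddenDir]
  cases x.2 <;> norm_num [inner_neg_right]

def parityWeight (p : ℝ) (b : Bool) : ℝ :=
  if b then p else 1 - p

def blank : State d := (0, false)

/-- A path of length `n` is indexed by `1, …, n` like `D` and `T` and is `blank` elsewhere, so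
that these paths form a finite set. -/
def paths (d : ℕ) : ℕ → Finset (ℕ → State d)
  | 0 => {fun _ => blank}
  | n + 1 => (paths d n ×ˢ (unitVecFinset d ×ˢ univ)).image fun q => Function.update q.1 (n + 1) q.2

theorem mem_paths_iff {n : ℕ} {r : ℕ → State d} :
    r ∈ paths d n ↔ (∀ i ∈ Icc 1 n, (r i).1 ∈ unitVecs d) ∧ ∀ i ∉ Icc 1 n, r i = blank := by
  induction n generalizing r with
  | zero => simp [paths, funext_iff]
  | succ n ih =>
    simp only [paths, mem_image, mem_product, mem_univ, and_true, Prod.exists, ih,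
      mem_unitVecFinset]
    constructor
    · rintro ⟨a, u, c, ⟨⟨ha, ha'⟩, hu⟩, rfl⟩
      constructor
      · intro i hi
        rcases eq_or_ne i (n + 1) with rfl | hin
        · simpa using hu
        · simp only [Function.update_of_ne hin]
          exact ha i (by simp only [mem_Icc] at hi ⊢; omega)
      · intro i hi
        have hin : i ≠ n + 1 := by rintro rfl; simp only [mem_Icc] at hi; omega
        simp only [Function.update_of_ne hin]
        exact ha' i (by simp only [mem_Icc] at hi ⊢; omega)
    · rintro ⟨hr, hr'⟩
      refine ⟨Function.update r (n + 1) blank, (r (n + 1)).1, (r (n + 1)).2, ⟨⟨?_, ?_⟩, ?_⟩, ?_⟩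
      · intro i hi
        have hin : i ≠ n + 1 := by simp only [mem_Icc] at hi; omega
        simpa [Function.update_of_ne hin] using hr i (by simp only [mem_Icc] at hi ⊢; omega)
      · intro i hi
        rcases eq_or_ne i (n + 1) with rfl | hin
        · simp
        · simpa [Function.update_of_ne hin] using hr' i (by simp only [mem_Icc] at hi ⊢; omega)
      · exact hr _ (by simp)
      · simp

theorem apply_eq_blank_of_mem_paths {n : ℕ} {r : ℕ → State d} (hr : r ∈ paths d n) {i : ℕ}
    (hi : n < i) : r i = blank :=
  (mem_paths_iff.1 hr).2 i (by simp only [mem_Icc]; omega)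

theorem sum_paths_succ {M : Type*} [AddCommMonoid M] (n : ℕ) (F : (ℕ → State d) → M) :
    ∑ r ∈ paths d (n + 1), F r
      = ∑ r ∈ paths d n, ∑ x ∈ unitVecFinset d ×ˢ univ, F (Function.update r (n + 1) x) := by
  rw [paths, sum_image, sum_product]
  rintro ⟨a, x⟩ ha ⟨a', x'⟩ ha' h
  simp only [coe_product, Set.mem_prod, mem_coe] at ha ha' h
  have hx : x = x' := by simpa using congrFun h (n + 1)
  subst hx
  refine Prod.ext (funext fun i => ?_) rfl
  rcases eq_or_ne i (n + 1) with rfl | hin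
  · exact (apply_eq_blank_of_mem_paths ha.1 n.lt_succ_self).trans
      (apply_eq_blank_of_mem_paths ha'.1 n.lt_succ_self).symm
  · simpa [Function.update_of_ne hin] using congrFun h i

def truncate (n : ℕ) (y : ℕ → State d) : ℕ → State d :=
  fun i => if i ∈ Icc 1 n then y i else blank

theorem truncate_mem_paths {n : ℕ} {y : ℕ → State d} (hy : ∀ i ∈ Icc 1 n, (y i).1 ∈ unitVecs d) :
    truncate n y ∈ paths d n :=
  mem_paths_iff.2 ⟨fun i hi => by simpa [truncate, hi] using hy i hi,
    fun i hi => by simp [truncate, hi]⟩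

theorem truncate_eq_iff {n : ℕ} {y r : ℕ → State d} (hr : r ∈ paths d n) :
    truncate n y = r ↔ ∀ i ∈ Icc 1 n, y i = r i := by
  constructor
  · rintro rfl i hi
    simp [truncate, hi]
  · intro h
    funext i
    by_cases hi : i ∈ Icc 1 n
    · simp [truncate, hi, h i hi]
    · simp [truncate, hi, (mem_paths_iff.1 hr).2 i hi]

def IsAdmissible (n : ℕ) (r : ℕ → State d) : Prop :=
  ∀ i ∈ Ico 1 n, (r (i + 1)).1 ≠ forbiddenDir (r i)

def pathWeight (p : ℝ) (n : ℕ) (r : ℕ → State d) : ℝ :=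
  if IsAdmissible n r then
    (2 * d : ℝ)⁻¹ * ((2 * d - 1 : ℝ)⁻¹) ^ (n - 1) * ∏ i ∈ Icc 1 n, parityWeight p (r i).2
  else 0

theorem isAdmissible_update {n : ℕ} (hn : 1 ≤ n) (r : ℕ → State d) (x : State d) :
    IsAdmissible (n + 1) (Function.update r (n + 1) x)
      ↔ IsAdmissible n r ∧ x.1 ≠ forbiddenDir (r n) := by
  have hr : ∀ i ≤ n, Function.update r (n + 1) x i = r i := fun i hi =>
    Function.update_of_ne (by omega) _ _
  simp only [IsAdmissible, mem_Ico]
  constructor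
  · intro h
    refine ⟨fun i hi => ?_, ?_⟩
    · simpa [hr i (by omega), hr (i + 1) (by omega)] using h i (by omega)
    · simpa [hr n le_rfl] using h n (by omega)
  · rintro ⟨h, hx⟩ i hi
    rcases eq_or_ne i n with rfl | hin
    · simpa [hr i le_rfl] using hx
    · simpa [hr i (by omega), hr (i + 1) (by omega)] using h i (by omega)

theorem pathWeight_update {n : ℕ} (hn : 1 ≤ n) (p : ℝ) (r : ℕ → State d) (x : State d) :
    pathWeight p (n + 1) (Function.update r (n + 1) x)
      = if x.1 = forbiddenDir (r n) then 0
        else (2 * d - 1 : ℝ)⁻¹ * parityWeight p x.2 * pathWeight p n r := by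
  have hprod : ∏ i ∈ Icc 1 n, parityWeight p (Function.update r (n + 1) x i).2
      = ∏ i ∈ Icc 1 n, parityWeight p (r i).2 :=
    prod_congr rfl fun i hi => by rw [Function.update_of_ne (by simp only [mem_Icc] at hi; omega)]
  obtain ⟨k, rfl⟩ : ∃ k, n = k + 1 := ⟨n - 1, by omega⟩
  rw [pathWeight, pathWeight, isAdmissible_update hn, prod_Icc_succ_top (by omega), hprod]
  by_cases hx : x.1 = forbiddenDir (r (k + 1))
  · simp [hx]
  by_cases hr : IsAdmissible (k + 1) r
  · simp only [hx, hr, ne_eq, not_false_eq_true, and_self, if_true, if_false, Function.update_self,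
      add_tsub_cancel_right, pow_succ]
    ring
  · simp [hx, hr]

/-- The conditional expectation of `G` given that the first `n` states are those of `y`. -/
def stepAverage (p : ℝ) (n : ℕ) (G : (ℕ → State d) → ℝ) (y : ℕ → State d) : ℝ :=
  (2 * d - 1 : ℝ)⁻¹ * ∑ v ∈ (unitVecFinset d).erase (forbiddenDir (y n)),
    ∑ c, parityWeight p c * G (Function.update y (n + 1) (v, c))

theorem sum_paths_succ_mul_pathWeight {n : ℕ} (hn : 1 ≤ n) (p : ℝ) (G : (ℕ → State d) → ℝ) :
    ∑ r ∈ paths d (n + 1), G r * pathWeight p (n + 1) r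
      = ∑ r ∈ paths d n, stepAverage p n G r * pathWeight p n r := by
  rw [sum_paths_succ]
  refine sum_congr rfl fun r _ => ?_
  simp only [pathWeight_update hn, stepAverage, sum_product, mul_ite, mul_zero]
  rw [← filter_ne', sum_filter, mul_sum, sum_mul]
  refine sum_congr rfl fun v _ => ?_
  by_cases hv : v = forbiddenDir (r n)
  · simp [hv]
  · simp only [hv, if_false, ne_eq, not_false_eq_true, if_true, mul_sum, sum_mul]
    exact sum_congr rfl fun c _ => by ring

theorem stepAverage_const (hd : 1 ≤ d) (p a : ℝ) {n : ℕ} {y : ℕ → State d}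
    (hy : (y n).1 ∈ unitVecs d) : stepAverage p n (fun _ => a) y = a := by
  have h2d : (2 * d - 1 : ℝ) ≠ 0 := by
    have : (1 : ℝ) ≤ d := by exact_mod_cast hd
    linarith
  have hpw : ∑ c, parityWeight p c * a = a := by
    simp only [Fintype.sum_bool, parityWeight, if_true, Bool.false_eq_true, if_false]
    ring
  rw [stepAverage, sum_congr rfl fun _ _ => hpw, sum_const, card_erase_forbiddenDir hy,
    nsmul_eq_mul, Nat.cast_sub (by omega), ← mul_assoc]
  push_cast
  rw [inv_mul_cancel₀ h2d, one_mul]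

theorem sum_pathWeight (hd : 1 ≤ d) (p : ℝ) {n : ℕ} (hn : 1 ≤ n) :
    ∑ r ∈ paths d n, pathWeight p n r = 1 := by
  induction n, hn using Nat.le_induction with
  | base =>
    have hd' : (2 * d : ℝ) ≠ 0 := by positivity
    have hpw : ∀ x : State d, pathWeight p 1 (Function.update (fun _ => blank) 1 x)
        = (2 * d : ℝ)⁻¹ * parityWeight p x.2 := fun x => by
      simp [pathWeight, IsAdmissible]
    rw [sum_paths_succ, paths, sum_singleton, sum_product]
    simp only [hpw, ← mul_sum, Fintype.sum_bool, parityWeight, if_true, Bool.false_eq_true,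
      if_false, add_sub_cancel, mul_one, sum_const, card_unitVecFinset, nsmul_eq_mul]
    push_cast
    exact mul_inv_cancel₀ hd'
  | succ n hn ih =>
    have := sum_paths_succ_mul_pathWeight (d := d) hn p (fun _ => 1)
    simp only [one_mul] at this
    rw [this]
    refine (sum_congr rfl fun r hr => ?_).trans ih
    rw [stepAverage_const hd p 1 ((mem_paths_iff.1 hr).1 n (by simp only [mem_Icc]; omega)), one_mul]

theorem stepAverage_inner_mul {m n : ℕ} (hmn : m ≤ n) (p : ℝ) (χ : Bool → ℝ)
    {y : ℕ → State d} (hy : (y n).1 ∈ unitVecs d) :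
    stepAverage p n (fun z => ⟪(z m).1, (z (n + 1)).1⟫_ℝ * (z m).2.toNat * χ (z (n + 1)).2) y
      = (2 * d - 1 : ℝ)⁻¹ * (p * χ true + (1 - p) * χ false)
        * (⟪(y m).1, (y n).1⟫_ℝ * (y m).2.toNat * (2 * (y n).2.toNat - 1)) := by
  have hm : m ≠ n + 1 := by omega
  simp only [stepAverage, Function.update_of_ne hm, Function.update_self]
  have hc : ∀ v, ∑ c, parityWeight p c * (⟪(y m).1, v⟫_ℝ * (y m).2.toNat * χ c)
      = (p * χ true + (1 - p) * χ false) * (⟪(y m).1, v⟫_ℝ * (y m).2.toNat) := fun v => by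
    simp only [Fintype.sum_bool, parityWeight, if_true, Bool.false_eq_true, if_false]
    ring
  simp only [hc, ← mul_sum, ← sum_mul, sum_erase_forbiddenDir_inner hy, real_inner_comm (y n).1]
  ring

theorem dependsOn_stepAverage {n : ℕ} (hn : 1 ≤ n) (p : ℝ) {G : (ℕ → State d) → ℝ}
    (hG : DependsOn G (Set.Icc 1 (n + 1))) : DependsOn (stepAverage p n G) (Set.Icc 1 n) := by
  intro y y' h
  simp only [stepAverage, h n ⟨hn, le_rfl⟩]
  congr! 4 with v _ c
  refine hG fun i hi => ?_
  rcases eq_or_ne i (n + 1) with rfl | hin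
  · simp
  · simpa [Function.update_of_ne hin] using h i ⟨hi.1, by grind⟩

variable {Ω : Type} [MeasurableSpace Ω] {μ : Measure Ω}

def path (Wk : ReinforcedWalk d Ω μ) (ω : Ω) (i : ℕ) : State d :=
  (Wk.D i ω, decide (Odd (Wk.T i ω)))

def cylinder (Wk : ReinforcedWalk d Ω μ) (n : ℕ) (r : ℕ → State d) : Set Ω :=
  {ω | ∀ i ∈ Icc 1 n, Wk.path ω i = r i}

theorem measure_dir_time_cylinder (Wk : ReinforcedWalk d Ω μ) {n : ℕ} (hn : 1 ≤ n)
    {r : ℕ → State d} (hr : ∀ i ∈ Icc 1 n, (r i).1 ∈ unitVecs d) (hadm : IsAdmissible n r)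
    {t : Icc 1 n → ℕ} (ht : ∀ i, decide (Odd (t i)) = (r i).2) :
    μ {ω | ∀ i : Icc 1 n, Wk.D i ω = (r i).1 ∧ Wk.T i ω = t i}
      = ENNReal.ofReal ((2 * d : ℝ)⁻¹ * ((2 * d - 1 : ℝ)⁻¹) ^ (n - 1))
        * ∏ i : Icc 1 n, μ {ω | Wk.T 1 ω = t i} := by
  -- `DT_path` asks for unit vectors at every index
  set v : ℕ → EuclideanSpace ℝ (Fin d) := fun m => if m ∈ Icc 1 n then (r m).1 else (r 1).1
  set t' : ℕ → ℕ := fun m => if h : m ∈ Icc 1 n then t ⟨m, h⟩ else 0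
  have hv : ∀ m, v m ∈ unitVecs d := fun m => by
    by_cases hm : m ∈ Icc 1 n
    · simpa only [v, if_pos hm] using hr m hm
    · simpa only [v, if_neg hm] using hr 1 (by simp only [mem_Icc]; omega)
  have hstep : ∀ m, 1 ≤ m → m + 1 ≤ n →
      (if Odd (t' m) then v (m + 1) ≠ -v m else v (m + 1) ≠ v m) := by
    intro m hm hmn
    have hm' : m ∈ Icc 1 n := by simp only [mem_Icc]; omega
    have hm1 : m + 1 ∈ Icc 1 n := by simp only [mem_Icc]; omega
    have hadm_m := hadm m (by simp only [mem_Ico]; omega)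
    have hpar := ht ⟨m, hm'⟩
    simp only [v, t', if_pos hm', if_pos hm1, dif_pos hm']
    by_cases ho : Odd (t ⟨m, hm'⟩) <;> simpa [forbiddenDir, ho, ← hpar] using hadm_m
  have hset : {ω | ∀ i : Icc 1 n, Wk.D i ω = (r i).1 ∧ Wk.T i ω = t i}
      = {ω | ∀ m, 1 ≤ m → m ≤ n → Wk.D m ω = v m ∧ Wk.T m ω = t' m} := by
    ext ω
    simp only [Subtype.forall, mem_Icc]
    refine forall_congr' fun m => ⟨fun h hm hmn => ?_, fun h hm => ?_⟩
    · simpa [v, t', hm, hmn] using h ⟨hm, hmn⟩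
    · simpa [v, t', hm] using h hm.1 hm.2
  rw [hset, Wk.DT_path n hn v t' hv hstep, ← prod_coe_sort (Icc 1 n)]
  exact congrArg _ (prod_congr rfl fun i _ => by simp only [t', dif_pos i.2])

theorem measure_cylinder_of_isAdmissible [IsFiniteMeasure μ] (Wk : ReinforcedWalk d Ω μ) {n : ℕ}
    (hn : 1 ≤ n) {r : ℕ → State d} (hr : ∀ i ∈ Icc 1 n, (r i).1 ∈ unitVecs d)
    (hadm : IsAdmissible n r) :
    μ (Wk.cylinder n r)
      = ENNReal.ofReal ((2 * d : ℝ)⁻¹ * ((2 * d - 1 : ℝ)⁻¹) ^ (n - 1))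
        * ∏ i ∈ Icc 1 n, μ {ω | decide (Odd (Wk.T 1 ω)) = (r i).2} := by
  -- Both sides are the mass of the parity box `B` under two measures on the countable space
  -- of time vectors which agree at each point of `B`.
  set c := ENNReal.ofReal ((2 * d : ℝ)⁻¹ * ((2 * d - 1 : ℝ)⁻¹) ^ (n - 1))
  set A : Set Ω := {ω | ∀ i : Icc 1 n, Wk.D i ω = (r i).1}
  set τ : Ω → Icc 1 n → ℕ := fun ω i => Wk.T i ω
  set B : Set (Icc 1 n → ℕ) := Set.univ.pi fun i => {a | decide (Odd a) = (r i).2}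
  have hτ : Measurable τ := measurable_pi_lambda _ fun i => Wk.measT i
  have hB : MeasurableSet B := .of_discrete
  have hcyl : Wk.cylinder n r = A ∩ τ ⁻¹' B := by
    ext ω
    simp [cylinder, A, τ, B, path, Prod.ext_iff, forall_and]
  have hT1 : ∀ s : Set ℕ, μ.map (Wk.T 1) s = μ (Wk.T 1 ⁻¹' s) := fun s =>
    Measure.map_apply (Wk.measT 1) .of_discrete
  calc μ (Wk.cylinder n r)
      = (μ.restrict A).map τ B := by
        rw [hcyl, Measure.map_apply hτ hB, Measure.restrict_apply (hτ hB), Set.inter_comm]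
    _ = (c • Measure.pi fun _ : Icc 1 n => μ.map (Wk.T 1)) B := by
        refine Measure.apply_eq_of_forall_singleton_eq B.to_countable fun t ht => ?_
        have hcyl_t : τ ⁻¹' {t} ∩ A
            = {ω | ∀ i : Icc 1 n, Wk.D i ω = (r i).1 ∧ Wk.T i ω = t i} := by
          ext ω
          simp [A, τ, funext_iff, forall_and, and_comm]
        rw [Measure.map_apply hτ (measurableSet_singleton t),
          Measure.restrict_apply (hτ (measurableSet_singleton t)), hcyl_t,
          Wk.measure_dir_time_cylinder hn hr hadm (by simpa [B] using ht), Measure.smul_apply,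
          Measure.pi_singleton, smul_eq_mul]
        simp only [hT1]
        rfl
    _ = _ := by
        rw [Measure.smul_apply, Measure.pi_pi, smul_eq_mul, ← prod_coe_sort (Icc 1 n)]
        simp only [hT1]
        rfl

theorem measurableSet_cylinder (Wk : ReinforcedWalk d Ω μ) (n : ℕ) (r : ℕ → State d) :
    MeasurableSet (Wk.cylinder n r) := by
  have hpath : ∀ i, Measurable fun ω => Wk.path ω i := fun i =>
    (Wk.measD i).prodMk ((measurable_from_nat (f := fun t => decide (Odd t))).comp (Wk.measT i))
  simp only [cylinder, Set.ofPred_forall]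
  exact .iInter fun i => .iInter fun _ => hpath i (measurableSet_singleton _)

theorem measureReal_odd_eq_parityWeight [IsProbabilityMeasure μ] (Wk : ReinforcedWalk d Ω μ)
    (b : Bool) : μ.real {ω | decide (Odd (Wk.T 1 ω)) = b} = parityWeight Wk.p b := by
  have hodd : MeasurableSet {ω | Odd (Wk.T 1 ω)} := Wk.measT 1 (.of_discrete (s := {t | Odd t}))
  cases b
  · have hcompl : {ω | decide (Odd (Wk.T 1 ω)) = false} = {ω | Odd (Wk.T 1 ω)}ᶜ := by ext; simp
    rw [hcompl, probReal_compl_eq_one_sub hodd]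
    rfl
  · simp [parityWeight, p, measureReal_def]

theorem integral_eq_sum_measureReal_cylinder [IsFiniteMeasure μ] (Wk : ReinforcedWalk d Ω μ)
    (n : ℕ) {G : (ℕ → State d) → ℝ} (hG : DependsOn G (Set.Icc 1 n)) :
    ∫ ω, G (Wk.path ω) ∂μ
      = ∑ r ∈ paths d n, G r * μ.real (Wk.cylinder n r) := by
  have htrunc : ∀ ω, G (Wk.path ω) = G (truncate n (Wk.path ω)) := fun ω =>
    hG fun i hi => by simp [truncate, Set.mem_Icc.1 hi]
  have hpre : ∀ r ∈ paths d n, (fun ω => truncate n (Wk.path ω)) ⁻¹' {r}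
      = Wk.cylinder n r := fun r hr => by
    ext ω
    exact truncate_eq_iff hr
  simp_rw [htrunc]
  rw [integral_comp_eq_sum_measureReal _ (paths d n)
    (fun ω => truncate_mem_paths fun i _ => Wk.D_mem i ω)
    (fun r hr => hpre r hr ▸ Wk.measurableSet_cylinder n r)]
  exact sum_congr rfl fun r hr => by rw [hpre r hr]

theorem measureReal_cylinder (hd : 1 ≤ d) [IsProbabilityMeasure μ] (Wk : ReinforcedWalk d Ω μ)
    {n : ℕ} (hn : 1 ≤ n) {r : ℕ → State d} (hr : r ∈ paths d n) :
    μ.real (Wk.cylinder n r) = pathWeight Wk.p n r := by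
  have hadm : ∀ r ∈ paths d n, IsAdmissible n r →
      μ.real (Wk.cylinder n r) = pathWeight Wk.p n r := by
    intro r hr hadm
    have hc : 0 ≤ (2 * d : ℝ)⁻¹ * ((2 * d - 1 : ℝ)⁻¹) ^ (n - 1) := by
      have : (1 : ℝ) ≤ d := by exact_mod_cast hd
      have : (0 : ℝ) ≤ 2 * d - 1 := by linarith
      positivity
    rw [measureReal_def, Wk.measure_cylinder_of_isAdmissible hn
      (mem_paths_iff.1 hr).1 hadm, ENNReal.toReal_mul, ENNReal.toReal_ofReal hc,
      ENNReal.toReal_prod, pathWeight, if_pos hadm]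
    simp only [← measureReal_def, measureReal_odd_eq_parityWeight]
  -- `DT_path` only covers admissible paths; the others are null because the admissible
  -- cylinders already carry total mass one.
  have hle : ∀ r ∈ paths d n,
      pathWeight Wk.p n r ≤ μ.real (Wk.cylinder n r) := fun r hr => by
    by_cases h : IsAdmissible n r
    · exact (hadm r hr h).ge
    · simp [pathWeight, h]
  have htotal := Wk.integral_eq_sum_measureReal_cylinder n
    ((dependsOn_const (1 : ℝ)).mono (Set.empty_subset _))
  simp only [integral_const, probReal_univ, smul_eq_mul, mul_one, one_mul] at htotal
  have hsum := (sum_pathWeight hd Wk.p hn).trans htotal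
  exact ((sum_eq_sum_iff_of_le hle).1 hsum r hr).symm

theorem integral_eq_sum_pathWeight (hd : 1 ≤ d) [IsProbabilityMeasure μ]
    (Wk : ReinforcedWalk d Ω μ) {n : ℕ} (hn : 1 ≤ n) {G : (ℕ → State d) → ℝ}
    (hG : DependsOn G (Set.Icc 1 n)) :
    ∫ ω, G (Wk.path ω) ∂μ = ∑ r ∈ paths d n, G r * pathWeight Wk.p n r := by
  rw [Wk.integral_eq_sum_measureReal_cylinder n hG]
  exact sum_congr rfl fun r hr => by rw [measureReal_cylinder hd Wk hn hr]

theorem integral_eq_integral_stepAverage (hd : 1 ≤ d) [IsProbabilityMeasure μ]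
    (Wk : ReinforcedWalk d Ω μ) {n : ℕ} (hn : 1 ≤ n) {G : (ℕ → State d) → ℝ}
    (hG : DependsOn G (Set.Icc 1 (n + 1))) :
    ∫ ω, G (Wk.path ω) ∂μ = ∫ ω, stepAverage Wk.p n G (Wk.path ω) ∂μ := by
  rw [integral_eq_sum_pathWeight hd Wk (by omega) hG,
    integral_eq_sum_pathWeight hd Wk hn (dependsOn_stepAverage hn Wk.p hG),
    sum_paths_succ_mul_pathWeight hn]

theorem L_eq_toNat (Wk : ReinforcedWalk d Ω μ) (m : ℕ) (ω : Ω) :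
    Wk.L m ω = (Wk.path ω m).2.toNat := by
  unfold L path
  by_cases h : Odd (Wk.T m ω) <;> simp [h]

theorem integral_L [IsProbabilityMeasure μ] (Wk : ReinforcedWalk d Ω μ) {m : ℕ} (hm : 1 ≤ m) :
    ∫ ω, (Wk.L m ω : ℝ) ∂μ = Wk.p := by
  obtain ⟨k, rfl⟩ : ∃ k, m = k + 1 := ⟨m - 1, by omega⟩
  have hL : (fun ω => (Wk.L (k + 1) ω : ℝ)) = (Wk.T (k + 1) ⁻¹' {t | Odd t}).indicator 1 := by
    funext ω
    by_cases h : Odd (Wk.T (k + 1) ω) <;> simp [L, h]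
  rw [hL, integral_indicator_one (Wk.measT _ (.of_discrete (s := {t | Odd t}))), measureReal_def,
    (Wk.T_ident k).measure_mem_eq (s := {t | Odd t}) .of_discrete]
  rfl

theorem integral_inner_mul_L_mul_succ (hd : 1 ≤ d) [IsProbabilityMeasure μ]
    (Wk : ReinforcedWalk d Ω μ) {m n : ℕ} (hm : 1 ≤ m) (hmn : m ≤ n) (χ : ℕ → ℝ) :
    ∫ ω, ⟪Wk.D m ω, Wk.D (n + 1) ω⟫_ℝ * (Wk.L m ω : ℝ) * χ (Wk.L (n + 1) ω) ∂μ
      = (2 * d - 1 : ℝ)⁻¹ * (Wk.p * χ 1 + (1 - Wk.p) * χ 0)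
        * ∫ ω, ⟪Wk.D m ω, Wk.D n ω⟫_ℝ * (Wk.L m ω : ℝ) * (2 * (Wk.L n ω : ℝ) - 1) ∂μ := by
  set G : (ℕ → State d) → ℝ :=
    fun z => ⟪(z m).1, (z (n + 1)).1⟫_ℝ * (z m).2.toNat * χ (z (n + 1)).2.toNat
  have hG : DependsOn G (Set.Icc 1 (n + 1)) := fun y y' h => by
    simp only [G, h m ⟨hm, by omega⟩, h (n + 1) ⟨by omega, le_rfl⟩]
  have hstep := fun ω => stepAverage_inner_mul hmn Wk.p (χ ∘ Bool.toNat) (Wk.D_mem n ω)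
    (y := Wk.path ω)
  simp only [Function.comp_apply, Bool.toNat_true, Bool.toNat_false] at hstep
  simp only [L_eq_toNat]
  rw [← integral_const_mul]
  exact (integral_eq_integral_stepAverage hd Wk (by omega) hG).trans
    (integral_congr_ae (ae_of_all _ hstep))

theorem integral_inner_mul_L_mul_two_L_sub_one (hd : 1 ≤ d) [IsProbabilityMeasure μ]
    (Wk : ReinforcedWalk d Ω μ) {m : ℕ} (hm : 1 ≤ m) (j : ℕ) :
    ∫ ω, ⟪Wk.D m ω, Wk.D (m + j) ω⟫_ℝ * (Wk.L m ω : ℝ) * (2 * (Wk.L (m + j) ω : ℝ) - 1) ∂μ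
      = Wk.p * ((2 * Wk.p - 1) / (2 * d - 1)) ^ j := by
  induction j with
  | zero =>
    have hL : ∀ ω, ⟪Wk.D m ω, Wk.D m ω⟫_ℝ * (Wk.L m ω : ℝ) * (2 * (Wk.L m ω : ℝ) - 1)
        = Wk.L m ω := fun ω => by
      rw [inner_self_of_mem_unitVecs (Wk.D_mem m ω)]
      by_cases h : Odd (Wk.T m ω) <;> norm_num [L, h]
    simp only [add_zero, hL, integral_L Wk hm, pow_zero, mul_one]
  | succ j ih =>
    rw [← add_assoc, integral_inner_mul_L_mul_succ hd Wk hm (by omega) (fun l => 2 * l - 1), ih]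
    push_cast
    ring

end ReinforcedWalk

theorem reinforced_direction_correlation_general
    {d : ℕ} (hd : 1 ≤ d) {Ω : Type} [MeasurableSpace Ω] {μ : Measure Ω}
    [IsProbabilityMeasure μ] (Wk : ReinforcedWalk d Ω μ) :
    ∀ m k : ℕ, 1 ≤ m → 1 ≤ k →
      ∫ ω, (inner ℝ (Wk.D m ω) (Wk.D (m + k) ω) : ℝ) * (Wk.L m ω : ℝ) * (Wk.L (m + k) ω : ℝ) ∂μ
        = (Wk.p ^ 2 / (2 * (d : ℝ) - 1)) * ((2 * Wk.p - 1) / (2 * (d : ℝ) - 1)) ^ (k - 1) := by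
  intro m k hm hk
  obtain ⟨j, rfl⟩ : ∃ j, k = j + 1 := ⟨k - 1, by omega⟩
  rw [← add_assoc, Wk.integral_inner_mul_L_mul_succ hd hm (by omega) (fun l => l),
    Wk.integral_inner_mul_L_mul_two_L_sub_one hd hm j]
  simp only [Nat.cast_one, Nat.cast_zero, add_tsub_cancel_right]
  ring

/-- With `p = P(T odd)` (and `p < 1` if `d = 1`), for all `m ≥ 1` and
`k ≥ 1`, `E((D_m ⬝ D_{m+k}) L_m L_{m+k}) = (p²/(2d-1)) ((2p-1)/(2d-1))^{k-1}`. -/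
theorem reinforced_direction_correlation
    {d : ℕ} (hd : 1 ≤ d) {Ω : Type} [MeasurableSpace Ω] {μ : Measure Ω}
    [IsProbabilityMeasure μ] (Wk : ReinforcedWalk d Ω μ)
    (hp : d = 1 → Wk.p < 1) :
    ∀ m k : ℕ, 1 ≤ m → 1 ≤ k →
      ∫ ω, (inner ℝ (Wk.D m ω) (Wk.D (m + k) ω) : ℝ) * (Wk.L m ω : ℝ) * (Wk.L (m + k) ω : ℝ) ∂μ
        = (Wk.p ^ 2 / (2 * (d : ℝ) - 1)) * ((2 * Wk.p - 1) / (2 * (d : ℝ) - 1)) ^ (k - 1) :=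
  reinforced_direction_correlation_general hd Wk
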